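/- arXiv:2206.10551 — 3 statements merged into one kernel-verified Lean document; each statement's English description precedes it below -/
import Mathlib

section
/- Let d ≥ 1 and let X be a nonempty closed subset of ℝ^d. Then X is convex if and only if for every affine line α in ℝ^d and every real number r ≥ 0, any two points of the tubular sublevel set X_{τ_α,r} = {x ∈ X : dist(x, α) ≤ r} can be joined by a continuous path lying entirely inside X_{τ_α,r} (equivalently, X_{τ_α,r} is path-connected whenever it is nonempty). -/
/-!
A neighbourhood `{infDist · α ≤ r}` of a convex set is convex, since `infDist · α` is a convex
function; so for convex `X` every tubular sublevel set is convex, hence path-connected.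

Conversely, if `z ∈ [x, y]` lies outside the closed set `X`, take `α` the line through `x`
and `y` and `r = infDist z X / 2`. A path from `x` to `y` inside the sublevel set must cross the
hyperplane through `z` orthogonal to `α`, at some `p ∈ X`; by Pythagoras `z` is the point of `α`
nearest to `p`, so `infDist z X ≤ dist p z = infDist p α ≤ r`, a contradiction.
-/

open Metric Set
open scoped RealInnerProductSpace

def tubularSublevelSet {E : Type*} [PseudoMetricSpace E] (X s : Set E) (r : ℝ) : Set E :=
  {x ∈ X | infDist x s ≤ r}

theorem JoinedIn.exists_mem_eq_of_mem_Icc {T : Type*} [TopologicalSpace T] {S : Set T}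
    {x y : T} (h : JoinedIn S x y) {f : T → ℝ} (hf : Continuous f) {c : ℝ}
    (hc : c ∈ Icc (f x) (f y)) : ∃ p ∈ S, f p = c := by
  obtain ⟨γ, hγ⟩ := h
  obtain ⟨_, ⟨t, rfl⟩, hγt⟩ :=
    (isConnected_range γ.continuous).isPreconnected.intermediate_value (mem_range_self 0)
      (mem_range_self 1) hf.continuousOn (by simpa using hc)
  exact ⟨γ t, hγ t, hγt⟩

section Normed

variable {E : Type*} [NormedAddCommGroup E] [NormedSpace ℝ E]

theorem dist_add_smul_add_smul_le {a b : ℝ} (ha : 0 ≤ a) (hb : 0 ≤ b) (p q p' q' : E) :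
    dist (a • p + b • q) (a • p' + b • q') ≤ a * dist p p' + b * dist q q' :=
  calc dist (a • p + b • q) (a • p' + b • q')
      ≤ dist (a • p) (a • p') + dist (b • q) (b • q') := dist_add_add_le _ _ _ _
    _ = a * dist p p' + b * dist q q' := by
      rw [dist_smul₀, dist_smul₀, Real.norm_of_nonneg ha, Real.norm_of_nonneg hb]

theorem Convex.convexOn_infDist {s : Set E} (hs : Convex ℝ s) :
    ConvexOn ℝ univ (infDist · s) := by
  rcases s.eq_empty_or_nonempty with rfl | hne
  · simpa using convexOn_const (0 : ℝ) convex_univ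
  refine ⟨convex_univ, fun p _ q _ a b ha hb hab => le_of_forall_pos_le_add fun ε hε => ?_⟩
  obtain ⟨p', hp's, hpp'⟩ := (infDist_lt_iff hne).1 (lt_add_of_pos_right (infDist p s) hε)
  obtain ⟨q', hq's, hqq'⟩ := (infDist_lt_iff hne).1 (lt_add_of_pos_right (infDist q s) hε)
  calc infDist (a • p + b • q) s
      ≤ dist (a • p + b • q) (a • p' + b • q') :=
        infDist_le_dist_of_mem (hs hp's hq's ha hb hab)
    _ ≤ a * dist p p' + b * dist q q' := dist_add_smul_add_smul_le ha hb _ _ _ _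
    _ ≤ a * (infDist p s + ε) + b * (infDist q s + ε) := by gcongr
    _ = a • infDist p s + b • infDist q s + ε := by
      rw [smul_eq_mul, smul_eq_mul]; linear_combination ε * hab

theorem Convex.tubularSublevelSet {X s : Set E} (hX : Convex ℝ X) (hs : Convex ℝ s) (r : ℝ) :
    Convex ℝ (tubularSublevelSet X s r) := by
  have hsub := hs.convexOn_infDist.convex_le r
  rw [sep_univ] at hsub
  exact hX.inter hsub

end Normed

section InnerProduct

variable {E : Type*} [NormedAddCommGroup E] [InnerProductSpace ℝ E]

theorem AffineSubspace.infDist_eq_dist_of_sub_mem_orthogonal {s : AffineSubspace ℝ E}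
    {p z : E} (hz : z ∈ s) (hpz : p - z ∈ s.directionᗮ) : infDist p s = dist p z := by
  refine le_antisymm (infDist_le_dist_of_mem hz) ((le_infDist ⟨z, hz⟩).2 fun q hq => ?_)
  have hperp : ⟪p - z, z - q⟫ = 0 :=
    Submodule.inner_left_of_mem_orthogonal (AffineSubspace.vsub_mem_direction hz hq) hpz
  have hpyth := norm_add_sq_eq_norm_sq_add_norm_sq_real hperp
  rw [sub_add_sub_cancel] at hpyth
  rw [dist_eq_norm, dist_eq_norm]
  exact (mul_self_le_mul_self_iff (norm_nonneg _) (norm_nonneg _)).2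
    (by rw [hpyth]; exact le_add_of_nonneg_right (mul_self_nonneg _))

theorem infDist_line_eq_dist_of_inner_eq_zero {x y z p : E} (hz : z ∈ line[ℝ, x, y])
    (hp : ⟪y - x, p - z⟫ = 0) : infDist p line[ℝ, x, y] = dist p z := by
  refine AffineSubspace.infDist_eq_dist_of_sub_mem_orthogonal hz ?_
  rwa [direction_affineSpan, vectorSpan_pair_rev,
    Submodule.mem_orthogonal_singleton_iff_inner_right]

theorem finrank_direction_line_eq_one {x y : E} (hxy : x ≠ y) :
    Module.finrank ℝ (line[ℝ, x, y]).direction = 1 := by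
  rw [direction_affineSpan, vectorSpan_pair]
  exact finrank_span_singleton (vsub_ne_zero.2 hxy)

theorem JoinedIn.exists_inner_sub_eq_zero_of_mem_segment {S : Set E} {x y z : E}
    (h : JoinedIn S x y) (hz : z ∈ segment ℝ x y) : ∃ p ∈ S, ⟪y - x, p - z⟫ = 0 := by
  rw [segment_eq_image'] at hz
  obtain ⟨t, ⟨ht0, ht1⟩, rfl⟩ := hz
  refine h.exists_mem_eq_of_mem_Icc (by fun_prop) ⟨?_, ?_⟩
  · have : x - (x + t • (y - x)) = -(t • (y - x)) := by abel
    rw [this, inner_neg_right, real_inner_smul_right, real_inner_self_eq_norm_sq]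
    nlinarith [sq_nonneg ‖y - x‖]
  · have : y - (x + t • (y - x)) = (1 - t) • (y - x) := by module
    rw [this, real_inner_smul_right, real_inner_self_eq_norm_sq]
    nlinarith [sq_nonneg ‖y - x‖]

theorem convex_of_forall_joinedIn_tubularSublevelSet_line {X : Set E} (hX : IsClosed X)
    (h : ∀ x ∈ X, ∀ y ∈ X, x ≠ y → ∀ r, 0 ≤ r →
      JoinedIn (tubularSublevelSet X line[ℝ, x, y] r) x y) :
    Convex ℝ X := by
  refine convex_iff_segment_subset.2 fun x hx y hy z hz => ?_
  rcases eq_or_ne x y with rfl | hxy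
  · rw [segment_same, mem_singleton_iff] at hz
    rwa [hz]
  by_contra hzX
  have hdist : 0 < infDist z X := (hX.notMem_iff_infDist_pos ⟨x, hx⟩).1 hzX
  obtain ⟨p, ⟨hpX, hpr⟩, hp⟩ :=
    (h x hx y hy hxy _ (half_pos hdist).le).exists_inner_sub_eq_zero_of_mem_segment hz
  have hzline : z ∈ line[ℝ, x, y] :=
    (AffineSubspace.convex _).segment_subset (left_mem_affineSpan_pair ℝ x y)
      (right_mem_affineSpan_pair ℝ x y) hz
  rw [infDist_line_eq_dist_of_inner_eq_zero hzline hp] at hpr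
  have hzp : infDist z X ≤ dist z p := infDist_le_dist_of_mem hpX
  rw [dist_comm] at hzp
  linarith

end InnerProduct

theorem convex_iff_tubular_sublevel_pathConnected_general
    (d : ℕ) (X : Set (EuclideanSpace ℝ (Fin d)))
    (hXclosed : IsClosed X) :
    Convex ℝ X ↔
      ∀ α : AffineSubspace ℝ (EuclideanSpace ℝ (Fin d)),
        Module.finrank ℝ α.direction = 1 →
        ∀ r : ℝ, 0 ≤ r →
          ∀ p₁ ∈ {x ∈ X | Metric.infDist x (α : Set (EuclideanSpace ℝ (Fin d))) ≤ r},
            ∀ p₂ ∈ {x ∈ X | Metric.infDist x (α : Set (EuclideanSpace ℝ (Fin d))) ≤ r},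
              JoinedIn {x ∈ X | Metric.infDist x (α : Set (EuclideanSpace ℝ (Fin d))) ≤ r}
                p₁ p₂ := by
  refine ⟨fun hX α _ r _ p₁ hp₁ p₂ hp₂ => ?_, fun h => ?_⟩
  · exact .of_segment_subset ((hX.tubularSublevelSet α.convex r).segment_subset hp₁ hp₂)
  · refine convex_of_forall_joinedIn_tubularSublevelSet_line hXclosed
      fun x hx y hy hxy r hr => h _ (finrank_direction_line_eq_one hxy) r hr x ?_ y ?_
    · exact ⟨hx, by simp [infDist_zero_of_mem (left_mem_affineSpan_pair ℝ x y), hr]⟩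
    · exact ⟨hy, by simp [infDist_zero_of_mem (right_mem_affineSpan_pair ℝ x y), hr]⟩

/-- A nonempty closed subset `X` of `ℝ^d` is convex if and only if every tubular sublevel
set `{x ∈ X | dist(x, α) ≤ r}` (for an affine line `α` and `r ≥ 0`) is path-connected, in
the sense that any two of its points are joined by a continuous path inside it. -/
theorem convex_iff_tubular_sublevel_pathConnected
    (d : ℕ) (hd : 1 ≤ d) (X : Set (EuclideanSpace ℝ (Fin d)))
    (hXne : X.Nonempty) (hXclosed : IsClosed X) :
    Convex ℝ X ↔
      ∀ α : AffineSubspace ℝ (EuclideanSpace ℝ (Fin d)),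
        Module.finrank ℝ α.direction = 1 →
        ∀ r : ℝ, 0 ≤ r →
          ∀ p₁ ∈ {x ∈ X | Metric.infDist x (α : Set (EuclideanSpace ℝ (Fin d))) ≤ r},
            ∀ p₂ ∈ {x ∈ X | Metric.infDist x (α : Set (EuclideanSpace ℝ (Fin d))) ≤ r},
              JoinedIn {x ∈ X | Metric.infDist x (α : Set (EuclideanSpace ℝ (Fin d))) ≤ r}
                p₁ p₂ :=
  convex_iff_tubular_sublevel_pathConnected_general d X hXclosed
end

section
/- Let d ≥ 1, let X ⊆ ℝ^d be a closed set, let p₁, p₂ ∈ X, let q be a point on the straight-line segment between p₁ and p₂, and suppose there is ε > 0 such that the open ball B(q, ε) is disjoint from X (so in particular q ∉ X, hence q ≠ p₁, q ≠ p₂, and p₁ ≠ p₂). Let α be the affine line through p₁ and p₂. Then for every r with 0 ≤ r < ε, both p₁ and p₂ belong to the tubular sublevel set X_{τ_α,r} = {x ∈ X : dist(x, α) ≤ r}, but there is no continuous path from p₁ to p₂ lying entirely inside X_{τ_α,r}. -/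
/-!
Any path from `p₁` to `p₂` crosses the hyperplane through `q` orthogonal to `p₂ - p₁`
(intermediate value theorem). At a crossing point `z`, `q` is the foot of the perpendicular
from `z` to the line `α`, so `dist z q = dist(z, α) ≤ r < ε` and `z` lies in the ball
`B(q, ε)`, which misses `X`.
-/

open Metric Set

section Euclidean

variable {E : Type*} [NormedAddCommGroup E] [InnerProductSpace ℝ E]

theorem AffineSubspace.dist_le_infDist_of_inner_eq_zero {s : AffineSubspace ℝ E} {q z : E}
    (hq : q ∈ s) (horth : ∀ v ∈ s.direction, inner ℝ (z - q) v = 0) :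
    dist z q ≤ infDist z s := by
  refine (le_infDist ⟨q, hq⟩).2 fun y hy => ?_
  have hyq : inner ℝ (z - q) (y - q) = 0 := horth _ (s.vsub_mem_direction hy hq)
  have hpyth : dist z y ^ 2 = dist z q ^ 2 + dist y q ^ 2 := by
    rw [dist_eq_norm, dist_eq_norm, dist_eq_norm, ← sub_sub_sub_cancel_right z y q,
      norm_sub_sq_real, hyq]
    ring
  nlinarith [dist_nonneg (x := z) (y := q), dist_nonneg (x := z) (y := y), sq_nonneg (dist y q)]

theorem inner_sub_left_nonpos_of_mem_segment {p₁ p₂ q : E} (hq : q ∈ segment ℝ p₁ p₂) :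
    inner ℝ (p₁ - q) (p₂ - p₁) ≤ 0 := by
  obtain ⟨a, b, -, hb, hab, rfl⟩ := hq
  have hp₁ : p₁ - (a • p₁ + b • p₂) = (-b) • (p₂ - p₁) := by
    rw [eq_sub_of_add_eq hab]; module
  rw [hp₁, real_inner_smul_left, real_inner_self_eq_norm_sq]
  nlinarith [sq_nonneg ‖p₂ - p₁‖]

theorem Path.exists_inner_sub_eq_zero_of_mem_segment {p₁ p₂ q : E} (γ : Path p₁ p₂)
    (hq : q ∈ segment ℝ p₁ p₂) : ∃ t, inner ℝ (γ t - q) (p₂ - p₁) = 0 := by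
  have h₁ : inner ℝ (γ 0 - q) (p₂ - p₁) ≤ 0 := by
    simpa using inner_sub_left_nonpos_of_mem_segment hq
  have h₂ : 0 ≤ inner ℝ (γ 1 - q) (p₂ - p₁) := by
    have := inner_sub_left_nonpos_of_mem_segment (segment_symm ℝ p₁ p₂ ▸ hq)
    rw [← neg_sub p₂ p₁, inner_neg_right] at this
    simpa using this
  exact intermediate_value_univ 0 1 (by fun_prop) ⟨h₁, h₂⟩

theorem Path.exists_dist_le_infDist_affineSpan_pair {p₁ p₂ q : E} (γ : Path p₁ p₂)
    (hq : q ∈ segment ℝ p₁ p₂) : ∃ t, dist (γ t) q ≤ infDist (γ t) (affineSpan ℝ {p₁, p₂}) := by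
  obtain ⟨t, ht⟩ := γ.exists_inner_sub_eq_zero_of_mem_segment hq
  refine ⟨t, AffineSubspace.dist_le_infDist_of_inner_eq_zero ?_ fun v hv => ?_⟩
  · rw [segment_eq_image_lineMap] at hq
    obtain ⟨c, -, rfl⟩ := hq
    exact AffineMap.lineMap_mem_affineSpan_pair c p₁ p₂
  · rw [direction_affineSpan, vectorSpan_pair, Submodule.mem_span_singleton] at hv
    obtain ⟨c, rfl⟩ := hv
    rw [vsub_eq_sub, ← neg_sub p₂, smul_neg, inner_neg_right, real_inner_smul_right, ht,
      mul_zero, neg_zero]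

end Euclidean

theorem not_joinedIn_tubular_sublevel_general
    (d : ℕ) (X : Set (EuclideanSpace ℝ (Fin d)))
    (p₁ p₂ q : EuclideanSpace ℝ (Fin d)) (hp₁ : p₁ ∈ X) (hp₂ : p₂ ∈ X)
    (hq : q ∈ segment ℝ p₁ p₂) (ε : ℝ)
    (hball : Metric.ball q ε ∩ X = ∅) (r : ℝ) (hr0 : 0 ≤ r) (hrε : r < ε) :
    (p₁ ∈ {x ∈ X |
        Metric.infDist x ((affineSpan ℝ {p₁, p₂} : AffineSubspace ℝ
          (EuclideanSpace ℝ (Fin d))) : Set (EuclideanSpace ℝ (Fin d))) ≤ r}) ∧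
    (p₂ ∈ {x ∈ X |
        Metric.infDist x ((affineSpan ℝ {p₁, p₂} : AffineSubspace ℝ
          (EuclideanSpace ℝ (Fin d))) : Set (EuclideanSpace ℝ (Fin d))) ≤ r}) ∧
    ¬ JoinedIn {x ∈ X |
        Metric.infDist x ((affineSpan ℝ {p₁, p₂} : AffineSubspace ℝ
          (EuclideanSpace ℝ (Fin d))) : Set (EuclideanSpace ℝ (Fin d))) ≤ r} p₁ p₂ := by
  have infDist_eq_zero {p} (hp : p ∈ ({p₁, p₂} : Set _)) :
      infDist p (affineSpan ℝ {p₁, p₂} : Set (EuclideanSpace ℝ (Fin d))) = 0 :=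
    infDist_zero_of_mem (subset_affineSpan ℝ _ hp)
  refine ⟨⟨hp₁, (infDist_eq_zero (by simp)).trans_le hr0⟩,
    ⟨hp₂, (infDist_eq_zero (by simp)).trans_le hr0⟩, ?_⟩
  rintro ⟨γ, hγ⟩
  obtain ⟨t, ht⟩ := γ.exists_dist_le_infDist_affineSpan_pair hq
  have hγt : γ t ∈ ball q ε ∩ X := ⟨(ht.trans (hγ t).2).trans_lt hrε, (hγ t).1⟩
  rwa [hball] at hγt

/-- Concave direction of the tubular-filtration theorem: if `X ⊆ ℝ^d` is closed,
`p₁, p₂ ∈ X`, `q` lies on the segment between them, and an open ball `B(q, ε)` is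
disjoint from `X`, then for the line `α` through `p₁` and `p₂` and any `0 ≤ r < ε`,
both `p₁` and `p₂` lie in the tubular sublevel set `{x ∈ X | dist(x, α) ≤ r}`, but
they cannot be joined by a continuous path inside it. -/
theorem not_joinedIn_tubular_sublevel
    (d : ℕ) (hd : 1 ≤ d) (X : Set (EuclideanSpace ℝ (Fin d))) (hXclosed : IsClosed X)
    (p₁ p₂ q : EuclideanSpace ℝ (Fin d)) (hp₁ : p₁ ∈ X) (hp₂ : p₂ ∈ X)
    (hq : q ∈ segment ℝ p₁ p₂) (ε : ℝ) (hε : 0 < ε)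
    (hball : Metric.ball q ε ∩ X = ∅) (r : ℝ) (hr0 : 0 ≤ r) (hrε : r < ε) :
    (p₁ ∈ {x ∈ X |
        Metric.infDist x ((affineSpan ℝ {p₁, p₂} : AffineSubspace ℝ
          (EuclideanSpace ℝ (Fin d))) : Set (EuclideanSpace ℝ (Fin d))) ≤ r}) ∧
    (p₂ ∈ {x ∈ X |
        Metric.infDist x ((affineSpan ℝ {p₁, p₂} : AffineSubspace ℝ
          (EuclideanSpace ℝ (Fin d))) : Set (EuclideanSpace ℝ (Fin d))) ≤ r}) ∧
    ¬ JoinedIn {x ∈ X |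
        Metric.infDist x ((affineSpan ℝ {p₁, p₂} : AffineSubspace ℝ
          (EuclideanSpace ℝ (Fin d))) : Set (EuclideanSpace ℝ (Fin d))) ≤ r} p₁ p₂ :=
  not_joinedIn_tubular_sublevel_general d X p₁ p₂ q hp₁ hp₂ hq ε hball r hr0 hrε
end

section
/- Let d ≥ 1 and let X be a nonempty closed subset of ℝ^d. Then X is convex if and only if for every affine line α in ℝ^d and every real number r ≥ 0, the tubular sublevel set X_{τ_α,r} = {x ∈ X : dist(x, α) ≤ r} is convex. -/
/-- A nonempty closed subset `X` of `ℝ^d` is convex if and only if all of its tubular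
sublevel sets `{x ∈ X | dist(x, α) ≤ r}`, for affine lines `α` and `r ≥ 0`, are convex. -/
theorem convex_iff_tubular_sublevel_convex
    (d : ℕ) (hd : 1 ≤ d) (X : Set (EuclideanSpace ℝ (Fin d)))
    (hXne : X.Nonempty) (hXclosed : IsClosed X) :
    Convex ℝ X ↔
      ∀ α : AffineSubspace ℝ (EuclideanSpace ℝ (Fin d)),
        Module.finrank ℝ α.direction = 1 →
        ∀ r : ℝ, 0 ≤ r →
          Convex ℝ {x ∈ X |
            Metric.infDist x (α : Set (EuclideanSpace ℝ (Fin d))) ≤ r} := by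
  constructor
  · intro hX α hα r hr
    have hαne : (α : Set (EuclideanSpace ℝ (Fin d))).Nonempty := by
      rw [AffineSubspace.nonempty_iff_ne_bot]
      intro hbot
      rw [hbot, AffineSubspace.direction_bot] at hα
      simp at hα
    have hset : {x ∈ X | Metric.infDist x (α : Set (EuclideanSpace ℝ (Fin d))) ≤ r}
        = X ∩ Metric.cthickening r (α : Set (EuclideanSpace ℝ (Fin d))) := by
      ext x
      simp only [Set.mem_setOf_eq, Set.mem_inter_iff, Metric.mem_cthickening_iff,
        Metric.infDist]
      rw [ENNReal.le_ofReal_iff_toReal_le (Metric.infEdist_ne_top hαne) hr]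
    rw [hset]
    exact hX.inter ((α.convex).cthickening r)
  · intro h
    intro x hx y hy a b ha hb hab
    by_cases hxy : x = y
    · subst hxy
      simpa [← add_smul, hab] using hx
    · set α := affineSpan ℝ ({x, y} : Set (EuclideanSpace ℝ (Fin d))) with hα
      have hdir : Module.finrank ℝ α.direction = 1 := by
        rw [hα, direction_affineSpan, vectorSpan_pair]
        rw [finrank_span_singleton (by simpa [sub_eq_zero] using hxy)]
      have hconv := h α hdir 0 le_rfl
      have hxm : x ∈ {z ∈ X | Metric.infDist z (α : Set (EuclideanSpace ℝ (Fin d))) ≤ 0} := by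
        refine ⟨hx, ?_⟩
        rw [Metric.infDist_zero_of_mem (by exact left_mem_affineSpan_pair ℝ x y)]
      have hym : y ∈ {z ∈ X | Metric.infDist z (α : Set (EuclideanSpace ℝ (Fin d))) ≤ 0} := by
        refine ⟨hy, ?_⟩
        rw [Metric.infDist_zero_of_mem (by exact right_mem_affineSpan_pair ℝ x y)]
      exact (hconv hxm hym ha hb hab).1
end
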